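/- Let G be a d-regular graph with d ≥ 7 containing no cycle of length 4, and suppose there exists a vertex x with neighbors x_1, ..., x_d satisfying: (1) for every i, the number of neighbors v of x_i such that v has a neighbor in the union of N(x_j) over j ≠ i is at most ⌈(d-1)/2⌉ - 1, and (2) for every i and every neighbor v of x_i, the number of neighbors of v lying in the union of N(x_j) over j ≠ i is at most ⌈(d-1)/2⌉ - 1. Then b(G) = d + 1. -/

import Mathlib

open SimpleGraph

variable {V : Type*} [Fintype V] [DecidableEq V]

/-- In a proper coloring `c` with `k` colors, a vertex is dominant if it has a
neighbor in every color class other than its own. -/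
def IsDominant {k : ℕ} (G : SimpleGraph V) (c : V → Fin k) (v : V) : Prop :=
  ∀ j : Fin k, j ≠ c v → ∃ u, G.Adj v u ∧ c u = j

/-- `c` is a proper coloring. -/
def ProperColoring {k : ℕ} (G : SimpleGraph V) (c : V → Fin k) : Prop :=
  ∀ u v, G.Adj u v → c u ≠ c v

/-- A b-coloring: proper, and every color class contains a dominant vertex. -/
def IsBColoring {k : ℕ} (G : SimpleGraph V) (c : V → Fin k) : Prop :=
  ProperColoring G c ∧ ∀ j : Fin k, ∃ v, c v = j ∧ IsDominant G c v

/-- The b-chromatic number: largest `k` admitting a b-coloring with `k` colors. -/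
noncomputable def bNum (G : SimpleGraph V) : ℕ :=
  sSup {k | ∃ c : V → Fin k, IsBColoring G c}

/-- Number of colors possessing a dominant vertex in the coloring `c`. -/
noncomputable def domColors {k : ℕ} (G : SimpleGraph V) (c : V → Fin k) : ℕ :=
  Nat.card {j : Fin k // ∃ v, c v = j ∧ IsDominant G c v}

/-- The f-chromatic vertex number of a d-regular graph: the maximum number of
colors having a dominant vertex, over proper (d+1)-colorings. -/
noncomputable def fNum (G : SimpleGraph V) (d : ℕ) : ℕ :=
  sSup {m | ∃ c : V → Fin (d+1), ProperColoring G c ∧ m = domColors G c}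

/-- `G` contains no cycle of length `n`. -/
def NoCycleOfLength (G : SimpleGraph V) (n : ℕ) : Prop :=
  ∀ (v : V) (w : G.Walk v v), w.IsCycle → w.length ≠ n

/-- `⌈n/2⌉` for a natural number `n`. -/
def ceilHalf (n : ℕ) : ℕ := (n + 1) / 2

/-!
A dominant vertex sees all other colours, so `b(G) ≤ d + 1`. For the lower bound it suffices to
find a proper `(d + 1)`-colouring that is injective on `N[z]` for every `z ∈ N[x]`: then `N[x]`
carries every colour and every vertex of `N[x]` is dominant. On the ball of radius 2 about `x`
such a colouring is a proper colouring of `G` plus the edges between vertices with a common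
neighbour in `N[x]`; it is built greedily and then extended greedily to all of `G`.

As `G` has no `C₄`, a vertex `v ∉ N[x]` lies in `N(x_i)` for at most one `i`, so its conflicts are
`N[x_i]` and its own neighbours. After `N[x]`, the vertices with a neighbour in some other
`N(x_j)` are coloured first: each sees at most `x`, `x_i`, `C` coloured vertices of `N(x_i)` by (1)
and `C` coloured neighbours outside `N[x_i]` by (2), where `2 C + 2 ≤ d`. Every remaining vertex
of `N(x_i)` conflicts only with vertices of `N[x_i]`, of which there are `d` besides itself.
-/

open Finset

section

variable {V : Type*} {G H : SimpleGraph V}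

lemma NoCycleOfLength.eq_of_adj_of_adj (h4 : NoCycleOfLength G 4) {a b u w : V} (hab : a ≠ b)
    (hua : G.Adj u a) (hub : G.Adj u b) (hwa : G.Adj w a) (hwb : G.Adj w b) : u = w := by
  by_contra huw
  refine h4 u (.cons hua (.cons hwa.symm (.cons hwb (.cons hub.symm .nil)))) ?_ rfl
  have := hua.ne; have := hub.ne; have := hwa.ne; have := hwb.ne
  simp only [Walk.cons_isCycle_iff, Walk.isPath_def, Walk.support_cons, Walk.support_nil,
    Walk.edges_cons, Walk.edges_nil, List.nodup_cons, List.mem_cons, List.not_mem_nil,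
    Sym2.eq_iff]
  aesop

lemma index_eq_of_adj_of_adj {d : ℕ} {x : V} {e : Fin d ↪ V}
    (hnbr : ∀ v, G.Adj x v ↔ ∃ i, e i = v) (h4 : NoCycleOfLength G 4) {v : V} {i j : Fin d}
    (hvx : v ≠ x) (hi : G.Adj (e i) v) (hj : G.Adj (e j) v) : i = j :=
  e.injective <| h4.eq_of_adj_of_adj hvx.symm ((hnbr _).2 ⟨i, rfl⟩).symm hi
    ((hnbr _).2 ⟨j, rfl⟩).symm hj

namespace SimpleGraph

/-- The proper colourings of this graph are the proper colourings of `G` that are injective on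
the closed neighbourhood of every vertex of `Z`. -/
def adjOrCommonNbr (G : SimpleGraph V) (Z : Set V) : SimpleGraph V where
  Adj u w := u ≠ w ∧ (G.Adj u w ∨ ∃ z ∈ Z, G.Adj z u ∧ G.Adj z w)
  symm := ⟨fun _ _ ⟨hne, h⟩ =>
    ⟨hne.symm, h.imp G.adj_symm fun ⟨z, hz, hu, hw⟩ => ⟨z, hz, hw, hu⟩⟩⟩
  loopless := ⟨fun _ h => h.1 rfl⟩

noncomputable instance (G : SimpleGraph V) (Z : Set V) : DecidableRel (G.adjOrCommonNbr Z).Adj :=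
  Classical.decRel _

def ProperOn {α : Type*} (H : SimpleGraph V) (c : V → α) (s : Finset V) : Prop :=
  ∀ u ∈ s, ∀ w ∈ s, H.Adj u w → c u ≠ c w

lemma le_adjOrCommonNbr (Z : Set V) : G ≤ G.adjOrCommonNbr Z :=
  fun _ _ h => ⟨h.ne, Or.inl h⟩

variable {α : Type*} {c : V → α} {s : Finset V}

lemma properOn_empty (H : SimpleGraph V) (c : V → α) : H.ProperOn c ∅ := by
  simp [ProperOn]

lemma ProperOn.mono (hc : H.ProperOn c s) (hle : G ≤ H) : G.ProperOn c s :=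
  fun u hu w hw huw => hc u hu w hw (hle huw)

lemma ProperOn.properColoring [Fintype V] {k : ℕ} {c : V → Fin k} (hc : H.ProperOn c univ) :
    ProperColoring H c :=
  fun u w huw => hc u (mem_univ u) w (mem_univ w) huw

lemma ProperOn.update_insert [DecidableEq V] {v : V} {m : α} (hc : H.ProperOn c s)
    (hm : ∀ u ∈ s, H.Adj v u → c u ≠ m) :
    H.ProperOn (Function.update c v m) (insert v s) := by
  intro u hu w hw huw
  rcases eq_or_ne u v with rfl | huv
  · rw [Function.update_self, Function.update_of_ne huw.ne']
    exact (hm w ((mem_insert.1 hw).resolve_left huw.ne') huw).symm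
  rcases eq_or_ne w v with rfl | hwv
  · rw [Function.update_self, Function.update_of_ne huv]
    exact hm u ((mem_insert.1 hu).resolve_left huv) huw.symm
  rw [Function.update_of_ne huv, Function.update_of_ne hwv]
  exact hc u ((mem_insert.1 hu).resolve_left huv) w ((mem_insert.1 hw).resolve_left hwv) huw

end SimpleGraph

end

namespace SimpleGraph

variable {G H : SimpleGraph V}

def closedNbhd (G : SimpleGraph V) [DecidableRel G.Adj] (v : V) : Finset V :=
  insert v (G.neighborFinset v)

def ballTwo (G : SimpleGraph V) [DecidableRel G.Adj] (x : V) : Finset V :=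
  (G.closedNbhd x).biUnion G.closedNbhd

variable [DecidableRel G.Adj]

lemma card_closedNbhd (v : V) : #(G.closedNbhd v) = G.degree v + 1 := by
  rw [closedNbhd, card_insert_of_notMem (by simp), card_neighborFinset_eq_degree]

lemma closedNbhd_subset_ballTwo {x z : V} (hz : z ∈ G.closedNbhd x) :
    G.closedNbhd z ⊆ G.ballTwo x :=
  subset_biUnion_of_mem G.closedNbhd hz

lemma ProperOn.exists_extend [DecidableRel H.Adj] {k : ℕ} {c : V → Fin k} {A B : Finset V}
    (hc : H.ProperOn c A) (hAB : A ⊆ B) (hB : ∀ v ∈ B \ A, #(H.neighborFinset v ∩ B) < k) :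
    ∃ c' : V → Fin k, H.ProperOn c' B ∧ ∀ a ∈ A, c' a = c a := by
  suffices ∀ t ⊆ B \ A, ∃ c' : V → Fin k, H.ProperOn c' (A ∪ t) ∧ ∀ a ∈ A, c' a = c a by
    simpa [union_sdiff_of_subset hAB] using this _ subset_rfl
  intro t ht
  induction t using Finset.induction_on with
  | empty => exact ⟨c, by simpa using hc, fun _ _ => rfl⟩
  | insert v t _ ih =>
    obtain ⟨c', hc', hc'A⟩ := ih ((subset_insert v t).trans ht)
    have hv := ht (mem_insert_self v t)
    have hAt : A ∪ t ⊆ B :=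
      union_subset hAB fun u hu => (mem_sdiff.1 (ht (mem_insert_of_mem hu))).1
    obtain ⟨m, -, hm⟩ := exists_mem_notMem_of_card_lt_card
      (s := (H.neighborFinset v ∩ (A ∪ t)).image c') (t := univ) <| calc
        #((H.neighborFinset v ∩ (A ∪ t)).image c') ≤ #(H.neighborFinset v ∩ (A ∪ t)) :=
          card_image_le
        _ ≤ #(H.neighborFinset v ∩ B) := card_le_card (inter_subset_inter_left hAt)
        _ < k := hB v hv
        _ = #univ := by simp
    refine ⟨Function.update c' v m, ?_, fun a ha => ?_⟩
    · rw [union_insert]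
      exact hc'.update_insert fun u hu hvu hcu =>
        hm (mem_image.2 ⟨u, mem_inter.2 ⟨(mem_neighborFinset H v u).2 hvu, hu⟩, hcu⟩)
    · rw [Function.update_of_ne (ne_of_mem_of_not_mem ha (mem_sdiff.1 hv).2), hc'A a ha]

lemma ProperOn.injOn_closedNbhd {α : Type*} {c : V → α} {s : Finset V} {Z : Set V}
    (hc : (G.adjOrCommonNbr Z).ProperOn c s) {z : V} (hz : z ∈ Z) (hs : G.closedNbhd z ⊆ s) :
    Set.InjOn c (G.closedNbhd z) := by
  intro u hu w hw huw
  by_contra hne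
  refine hc u (hs hu) w (hs hw) ⟨hne, ?_⟩ huw
  simp only [closedNbhd, coe_insert, Set.mem_insert_iff, mem_coe, mem_neighborFinset] at hu hw
  rcases hu with rfl | hu <;> rcases hw with rfl | hw
  · exact absurd rfl hne
  · exact Or.inl hw
  · exact Or.inl hu.symm
  · exact Or.inr ⟨z, hz, hu, hw⟩

lemma card_neighborFinset_inter_lt_card [DecidableRel H.Adj] {s : Finset V} {v : V}
    (hv : v ∈ s) : #(H.neighborFinset v ∩ s) < #s :=
  card_lt_card <| (ssubset_iff_of_subset inter_subset_right).2 ⟨v, hv, by simp⟩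

end SimpleGraph

open SimpleGraph

section Dominance

variable {G : SimpleGraph V} [DecidableRel G.Adj] {k d : ℕ} {c : V → Fin k}

lemma IsDominant.le_degree_add_one {v : V} (h : IsDominant G c v) : k ≤ G.degree v + 1 := by
  have hsub : (univ : Finset (Fin k)) ⊆ (G.closedNbhd v).image c := by
    intro j _
    by_cases hj : j = c v
    · exact mem_image.2 ⟨v, mem_insert_self v _, hj.symm⟩
    obtain ⟨u, hu, rfl⟩ := h j hj
    exact mem_image_of_mem c (mem_insert_of_mem ((mem_neighborFinset G v u).2 hu))
  calc k = #(univ : Finset (Fin k)) := by simp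
    _ ≤ #(G.closedNbhd v) := (card_le_card hsub).trans card_image_le
    _ = G.degree v + 1 := card_closedNbhd v

lemma IsBColoring.le_add_one (hc : IsBColoring G c) (hreg : G.IsRegularOfDegree d) :
    k ≤ d + 1 := by
  rcases k with _ | k
  · exact Nat.zero_le _
  obtain ⟨v, -, hv⟩ := hc.2 0
  simpa [hreg v] using hv.le_degree_add_one

lemma bNum_eq_of_isBColoring (hreg : G.IsRegularOfDegree d) {c : V → Fin (d + 1)}
    (hc : IsBColoring G c) : bNum G = d + 1 := by
  have hbdd : ∀ k ∈ {k | ∃ c : V → Fin k, IsBColoring G c}, k ≤ d + 1 :=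
    fun _ ⟨_, hc'⟩ => hc'.le_add_one hreg
  exact le_antisymm (csSup_le ⟨_, c, hc⟩ hbdd) (le_csSup ⟨_, hbdd⟩ ⟨c, hc⟩)

lemma image_closedNbhd_eq_univ {v : V} (hc : Set.InjOn c (G.closedNbhd v))
    (hk : G.degree v + 1 = k) : (G.closedNbhd v).image c = univ :=
  eq_univ_of_card _ (by rw [card_image_of_injOn hc, card_closedNbhd, hk, Fintype.card_fin])

lemma isDominant_of_injOn_closedNbhd {v : V} (hc : Set.InjOn c (G.closedNbhd v))
    (hk : G.degree v + 1 = k) : IsDominant G c v := by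
  intro j hj
  obtain ⟨u, hu, rfl⟩ := mem_image.1 (image_closedNbhd_eq_univ hc hk ▸ mem_univ j)
  rcases mem_insert.1 hu with rfl | hu
  · exact absurd rfl hj
  · exact ⟨u, (mem_neighborFinset G v u).1 hu, rfl⟩

lemma isBColoring_of_injOn_closedNbhd (hreg : G.IsRegularOfDegree d) {c : V → Fin (d + 1)}
    (hc : ProperColoring G c) (x : V)
    (hinj : ∀ z ∈ G.closedNbhd x, Set.InjOn c (G.closedNbhd z)) :
    IsBColoring G c := by
  refine ⟨hc, fun j => ?_⟩
  have hx := image_closedNbhd_eq_univ (hinj x (mem_insert_self x _)) (by rw [hreg x])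
  obtain ⟨z, hz, rfl⟩ := mem_image.1 (hx ▸ mem_univ j)
  exact ⟨z, rfl, isDominant_of_injOn_closedNbhd (hinj z hz) (by rw [hreg z])⟩

end Dominance

namespace SimpleGraph

variable {G : SimpleGraph V} {d : ℕ}

def nbrsExcept (G : SimpleGraph V) (e : Fin d ↪ V) (i : Fin d) : Set V :=
  {w | ∃ j, j ≠ i ∧ G.Adj (e j) w}

variable [DecidableRel G.Adj]

def crossVertices (G : SimpleGraph V) [DecidableRel G.Adj] (e : Fin d ↪ V) : Finset V :=
  {v | ∃ i, G.Adj (e i) v ∧ ∃ w, G.Adj v w ∧ ∃ j, j ≠ i ∧ G.Adj (e j) w}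

variable {x : V} {e : Fin d ↪ V}

lemma mem_closedNbhd_iff (hnbr : ∀ v, G.Adj x v ↔ ∃ i, e i = v) {u : V} :
    u ∈ G.closedNbhd x ↔ u = x ∨ ∃ i, e i = u := by
  rw [closedNbhd, mem_insert, mem_neighborFinset, hnbr]

lemma mem_ballTwo_iff (hnbr : ∀ v, G.Adj x v ↔ ∃ i, e i = v) {v : V} :
    v ∈ G.ballTwo x ↔ v ∈ G.closedNbhd x ∨ ∃ i, G.Adj (e i) v := by
  simp only [ballTwo, mem_biUnion]
  constructor
  · rintro ⟨z, hz, hv⟩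
    rcases (mem_closedNbhd_iff hnbr).1 hz with rfl | ⟨i, rfl⟩
    · exact Or.inl hv
    rcases mem_insert.1 hv with rfl | hv
    · exact Or.inl hz
    · exact Or.inr ⟨i, (mem_neighborFinset G _ v).1 hv⟩
  · rintro (hv | ⟨i, hi⟩)
    · exact ⟨x, mem_insert_self x _, hv⟩
    · exact ⟨e i, (mem_closedNbhd_iff hnbr).2 (Or.inr ⟨i, rfl⟩),
        mem_insert_of_mem ((mem_neighborFinset G _ v).2 hi)⟩

lemma crossVertices_subset_ballTwo (hnbr : ∀ v, G.Adj x v ↔ ∃ i, e i = v) :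
    G.crossVertices e ⊆ G.ballTwo x := fun v hv => by
  obtain ⟨i, hi, -⟩ := (mem_filter.1 hv).2
  exact (mem_ballTwo_iff hnbr).2 (Or.inr ⟨i, hi⟩)

lemma adj_or_adj_of_adjOrCommonNbr (hnbr : ∀ v, G.Adj x v ↔ ∃ i, e i = v)
    (h4 : NoCycleOfLength G 4) {u v : V} {i : Fin d} (hvx : v ∉ G.closedNbhd x)
    (hi : G.Adj (e i) v) (hvu : (G.adjOrCommonNbr (G.closedNbhd x)).Adj v u) :
    G.Adj v u ∨ G.Adj (e i) u := by
  obtain ⟨-, hvu | ⟨z, hz, hzv, hzu⟩⟩ := hvu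
  · exact Or.inl hvu
  rcases (mem_closedNbhd_iff hnbr).1 hz with rfl | ⟨j, rfl⟩
  · exact absurd (mem_insert_of_mem ((mem_neighborFinset G _ v).2 hzv)) hvx
  · rw [index_eq_of_adj_of_adj hnbr h4 (ne_of_mem_of_not_mem (mem_insert_self x _) hvx).symm
      hi hzv]
    exact Or.inr hzu

lemma eq_of_adj_of_mem_closedNbhd (hnbr : ∀ v, G.Adj x v ↔ ∃ i, e i = v)
    (h4 : NoCycleOfLength G 4) {u v : V} {i : Fin d} (hvx : v ∉ G.closedNbhd x)
    (hi : G.Adj (e i) v) (hu : u ∈ G.closedNbhd x) (hvu : G.Adj v u) : u = e i := by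
  rcases (mem_closedNbhd_iff hnbr).1 hu with rfl | ⟨j, rfl⟩
  · exact absurd (mem_insert_of_mem ((mem_neighborFinset G _ v).2 hvu.symm)) hvx
  · rw [index_eq_of_adj_of_adj hnbr h4 (ne_of_mem_of_not_mem (mem_insert_self x _) hvx).symm
      hvu.symm hi]

lemma card_adjOrCommonNbr_inter_lt_of_mem_crossVertices
    (hnbr : ∀ v, G.Adj x v ↔ ∃ i, e i = v) (h4 : NoCycleOfLength G 4) {C : ℕ}
    (hC : 2 * C + 2 ≤ d)
    (h1 : ∀ i, {v | G.Adj (e i) v ∧ ∃ w, G.Adj v w ∧ w ∈ G.nbrsExcept e i}.ncard ≤ C)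
    (h2 : ∀ i v, G.Adj (e i) v → (G.neighborSet v ∩ G.nbrsExcept e i).ncard ≤ C) {v : V}
    (hv : v ∈ (G.closedNbhd x ∪ G.crossVertices e) \ G.closedNbhd x) :
    #((G.adjOrCommonNbr (G.closedNbhd x)).neighborFinset v ∩
      (G.closedNbhd x ∪ G.crossVertices e)) < d + 1 := by
  obtain ⟨hvc, hvx⟩ := mem_sdiff.1 hv
  obtain ⟨i, hi, -⟩ := (mem_filter.1 ((mem_union.1 hvc).resolve_left hvx)).2
  have hsub : (↑((G.adjOrCommonNbr (G.closedNbhd x)).neighborFinset v ∩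
      (G.closedNbhd x ∪ G.crossVertices e)) : Set V) ⊆ ({x, e i} : Set V) ∪
      {u | G.Adj (e i) u ∧ ∃ w, G.Adj u w ∧ w ∈ G.nbrsExcept e i} ∪
      (G.neighborSet v ∩ G.nbrsExcept e i) := by
    intro u hu
    rw [coe_inter, Set.mem_inter_iff, mem_coe, mem_neighborFinset, mem_coe] at hu
    obtain ⟨hvu, hu⟩ := hu
    by_cases hiu : G.Adj (e i) u
    · rcases eq_or_ne u x with rfl | hux
      · exact Or.inl (Or.inl (Set.mem_insert _ _))
      refine Or.inl (Or.inr ⟨hiu, ?_⟩)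
      rcases mem_union.1 hu with hu | hu
      · -- `x` is a neighbour of `u = e k` lying in every other `N(e j)`
        obtain ⟨k, rfl⟩ := ((mem_closedNbhd_iff hnbr).1 hu).resolve_left hux
        have : Nontrivial (Fin d) := Fin.nontrivial_iff_two_le.2 (by omega)
        obtain ⟨j, hji⟩ := exists_ne i
        exact ⟨x, ((hnbr _).2 ⟨k, rfl⟩).symm, j, hji, ((hnbr _).2 ⟨j, rfl⟩).symm⟩
      · obtain ⟨i', hi'u, hw⟩ := (mem_filter.1 hu).2
        rwa [index_eq_of_adj_of_adj hnbr h4 hux hi'u hiu] at hw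
    · have hvu' := (adj_or_adj_of_adjOrCommonNbr hnbr h4 hvx hi hvu).resolve_right hiu
      rcases mem_union.1 hu with hu | hu
      · exact Or.inl (Or.inl (Set.mem_insert_of_mem _
          (eq_of_adj_of_mem_closedNbhd hnbr h4 hvx hi hu hvu')))
      · obtain ⟨j, hju, -⟩ := (mem_filter.1 hu).2
        exact Or.inr ⟨hvu', j, fun hji => hiu (hji ▸ hju), hju⟩
  calc _ = _ := (Set.ncard_coe_finset _).symm
    _ ≤ _ := Set.ncard_le_ncard hsub
    _ ≤ 2 + C + C := by
      grw [Set.ncard_union_le, Set.ncard_union_le, Set.ncard_insert_le, Set.ncard_singleton,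
        h1 i, h2 i v hi]
    _ < d + 1 := by omega

lemma card_adjOrCommonNbr_inter_ballTwo_lt (hreg : G.IsRegularOfDegree d)
    (hnbr : ∀ v, G.Adj x v ↔ ∃ i, e i = v) (h4 : NoCycleOfLength G 4) {v : V}
    (hv : v ∈ G.ballTwo x \ (G.closedNbhd x ∪ G.crossVertices e)) :
    #((G.adjOrCommonNbr (G.closedNbhd x)).neighborFinset v ∩ G.ballTwo x) < d + 1 := by
  obtain ⟨hvb, hv⟩ := mem_sdiff.1 hv
  obtain ⟨hvx, hvc⟩ := not_or.1 (mem_union.not.1 hv)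
  obtain ⟨i, hi⟩ := ((mem_ballTwo_iff hnbr).1 hvb).resolve_left hvx
  have hsub : (G.adjOrCommonNbr (G.closedNbhd x)).neighborFinset v ∩ G.ballTwo x ⊆
      insert (e i) ((G.neighborFinset (e i)).erase v) := by
    intro u hu
    rw [mem_inter, mem_neighborFinset] at hu
    obtain ⟨hvu, hu⟩ := hu
    rcases adj_or_adj_of_adjOrCommonNbr hnbr h4 hvx hi hvu with hvu' | hiu
    · rcases (mem_ballTwo_iff hnbr).1 hu with hu | ⟨j, hju⟩
      · exact mem_insert.2 (Or.inl (eq_of_adj_of_mem_closedNbhd hnbr h4 hvx hi hu hvu'))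
      obtain rfl : j = i := by
        by_contra hji
        exact hvc (mem_filter.2 ⟨mem_univ _, i, hi, u, hvu', j, hji, hju⟩)
      exact mem_insert_of_mem (mem_erase.2 ⟨hvu.ne', (mem_neighborFinset G _ u).2 hju⟩)
    · exact mem_insert_of_mem (mem_erase.2 ⟨hvu.ne', (mem_neighborFinset G _ u).2 hiu⟩)
  calc _ ≤ #(insert (e i) ((G.neighborFinset (e i)).erase v)) := card_le_card hsub
    _ ≤ #((G.neighborFinset (e i)).erase v) + 1 := card_insert_le _ _
    _ = d := by
      rw [card_erase_add_one ((mem_neighborFinset G _ v).2 hi), card_neighborFinset_eq_degree,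
        hreg]
    _ < d + 1 := lt_add_one d

lemma exists_properColoring_injOn_closedNbhd (hreg : G.IsRegularOfDegree d)
    (hnbr : ∀ v, G.Adj x v ↔ ∃ i, e i = v) (h4 : NoCycleOfLength G 4) {C : ℕ}
    (hC : 2 * C + 2 ≤ d)
    (h1 : ∀ i, {v | G.Adj (e i) v ∧ ∃ w, G.Adj v w ∧ w ∈ G.nbrsExcept e i}.ncard ≤ C)
    (h2 : ∀ i v, G.Adj (e i) v → (G.neighborSet v ∩ G.nbrsExcept e i).ncard ≤ C) :
    ∃ c : V → Fin (d + 1), ProperColoring G c ∧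
      ∀ z ∈ G.closedNbhd x, Set.InjOn c (G.closedNbhd z) := by
  obtain ⟨c₁, hc₁, -⟩ := (properOn_empty (G.adjOrCommonNbr (G.closedNbhd x))
    fun _ => (0 : Fin (d + 1))).exists_extend (empty_subset _) fun v hv => by
      rw [← hreg x, ← card_closedNbhd]
      exact card_neighborFinset_inter_lt_card (mem_sdiff.1 hv).1
  obtain ⟨c₂, hc₂, -⟩ := hc₁.exists_extend subset_union_left fun v hv =>
    card_adjOrCommonNbr_inter_lt_of_mem_crossVertices hnbr h4 hC h1 h2 hv
  obtain ⟨c₃, hc₃, -⟩ := hc₂.exists_extend (union_subset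
    (closedNbhd_subset_ballTwo (mem_insert_self x _)) (crossVertices_subset_ballTwo hnbr))
    fun v hv => card_adjOrCommonNbr_inter_ballTwo_lt hreg hnbr h4 hv
  obtain ⟨c, hc, hc₃c⟩ := (hc₃.mono (le_adjOrCommonNbr _)).exists_extend (subset_univ _)
    fun v _ => by rw [inter_univ, card_neighborFinset_eq_degree, hreg v]; exact lt_add_one d
  refine ⟨c, hc.properColoring, fun z hz => ?_⟩
  have hzB := closedNbhd_subset_ballTwo hz
  exact (hc₃.injOn_closedNbhd hz hzB).congr fun u hu => (hc₃c u (hzB hu)).symm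

end SimpleGraph

theorem bNum_eq_of_no_C4_special_vertex_general (G : SimpleGraph V)
    [DecidableRel G.Adj] (d : ℕ) (hd : 7 ≤ d) (hreg : G.IsRegularOfDegree d)
    (h4 : NoCycleOfLength G 4)
    (x : V) (e : Fin d ↪ V) (hnbr : ∀ v, G.Adj x v ↔ ∃ i, e i = v)
    (h1 : ∀ i : Fin d,
      {v : V | G.Adj (e i) v ∧ ∃ w, G.Adj v w ∧ ∃ j, j ≠ i ∧ G.Adj (e j) w}.ncard ≤
        ceilHalf (d - 1) - 1)
    (h2 : ∀ i : Fin d, ∀ v, G.Adj (e i) v →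
      {w : V | G.Adj v w ∧ ∃ j, j ≠ i ∧ G.Adj (e j) w}.ncard ≤ ceilHalf (d - 1) - 1) :
    bNum G = d + 1 := by
  have hC : 2 * (ceilHalf (d - 1) - 1) + 2 ≤ d := by unfold ceilHalf; omega
  obtain ⟨c, hc, hinj⟩ := exists_properColoring_injOn_closedNbhd hreg hnbr h4 hC h1 h2
  exact bNum_eq_of_isBColoring hreg (isBColoring_of_injOn_closedNbhd hreg hc x hinj)

theorem bNum_eq_of_no_C4_special_vertex (G : SimpleGraph V) [Nonempty V]
    [DecidableRel G.Adj] (d : ℕ) (hd : 7 ≤ d) (hreg : G.IsRegularOfDegree d)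
    (h4 : NoCycleOfLength G 4)
    (x : V) (e : Fin d ↪ V) (hnbr : ∀ v, G.Adj x v ↔ ∃ i, e i = v)
    (h1 : ∀ i : Fin d,
      {v : V | G.Adj (e i) v ∧ ∃ w, G.Adj v w ∧ ∃ j, j ≠ i ∧ G.Adj (e j) w}.ncard ≤
        ceilHalf (d - 1) - 1)
    (h2 : ∀ i : Fin d, ∀ v, G.Adj (e i) v →
      {w : V | G.Adj v w ∧ ∃ j, j ≠ i ∧ G.Adj (e j) w}.ncard ≤ ceilHalf (d - 1) - 1) :
    bNum G = d + 1 :=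
  bNum_eq_of_no_C4_special_vertex_general G d hd hreg h4 x e hnbr h1 h2
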